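/- arXiv:0904.4064 — 5 statements merged into one kernel-verified Lean document; each statement's English description precedes it below -/
import Mathlib

section
/- Setup: let r ≥ 1, l ∈ ℕ^r with l_k ≥ 1 and l_1+···+l_r = n, d ∈ ℕ^r with d_k ≥ 1, and s_0 ≤ ··· ≤ s_n positive integers. For m ∈ ℤ^r define P_k(m) = {z ∈ ℤ : m_k < z d_k ≤ m_k + l_k}, Q_p = S_p \ ⋃_k P_k(m), q(z) = Σ_{k : P_k(m) < z} l_k (where P_k < z means z d_k > m_k + l_k), and N(m) = { p − q(z) : p ∈ {0,...,n+1}, z ∈ Q_p }. Theorem: if N(m) consists of exactly two consecutive integers, then N(m) = {0, 1}. -/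
/-- `P_k(m) = {z ∈ ℤ : m < z·d ≤ m + l}`, the integers in `(m/d, (m+l)/d]`. -/
def Pset (m : ℤ) (d l : ℕ) : Set ℤ := {z : ℤ | m < z * d ∧ z * d ≤ m + l}

/-- The set of sums of `p` distinct entries of `s`. -/
def Sset {n : ℕ} (s : Fin (n + 1) → ℕ) (p : ℕ) : Set ℤ :=
  {t : ℤ | ∃ A : Finset (Fin (n + 1)), A.card = p ∧ t = ∑ i ∈ A, (s i : ℤ)}

/-- `q(z) = Σ_{P_k(m) < z} l_k`, where `P_k < z` means `z·d_k > m_k + l_k`. -/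
def qval {r : ℕ} (l d : Fin r → ℕ) (m : Fin r → ℤ) (z : ℤ) : ℕ :=
  ∑ k ∈ Finset.univ.filter (fun k => m k + (l k : ℤ) < z * (d k : ℤ)), l k

/-- `N(m) = { p − q(z) : p ∈ [0, n+1], z ∈ Q_p }` with `Q_p = S_p \ ⋃_k P_k(m)`. -/
def Nset {r n : ℕ} (l d : Fin r → ℕ) (s : Fin (n + 1) → ℕ) (m : Fin r → ℤ) : Set ℤ :=
  {ν : ℤ | ∃ p : ℕ, p ≤ n + 1 ∧ ∃ z : ℤ,
    (z ∈ Sset s p ∧ ∀ k, z ∉ Pset (m k) (d k) (l k)) ∧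
    ν = (p : ℤ) - (qval l d m z : ℤ)}

/-!
Since `N(m)` is a pair of consecutive integers, it suffices to find an element `≥ 1` and an
element `≤ 0` in it.

Along any strictly increasing chain `z_0 < ⋯ < z_{n+1}` some `z_p` outside every `P_k` has
`q(z_p) < p`. Indeed, let `a` be the last index with `a ≤ q(z_a)`, so that `q(z_p) < p` for all
`p > a`. If `z_{a+1}, …, z_{n+1}` all lay in some `P_k`, these `n + 1 - a` integers would
lie in the `P_k` not yet passed at `z_{a+1}`, which contain at most `n - q(z_{a+1}) ≤ n - a`
integers in total. The prefix sums of `s` form such a chain with `z_p ∈ S_p`, giving an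
element `≥ 1`.

The substitution `z ↦ -z`, `m_k ↦ -m_k - l_k - 1` preserves the `P_k` and turns `q(z)` into
`n - q(z)` outside them; applied to the negated prefix sums in reverse order it gives an
element `≤ 0`.
-/

open Finset

theorem neg_mem_Pset_iff {m : ℤ} {d l : ℕ} {z : ℤ} :
    -z ∈ Pset (-m - l - 1) d l ↔ z ∈ Pset m d l := by
  simp only [Pset, Set.mem_ofPred_eq, neg_mul]
  omega

theorem card_le_of_forall_mem_Pset {m : ℤ} {d l : ℕ} (hd : 0 < d) {Z : Finset ℤ}
    (hZ : ∀ z ∈ Z, z ∈ Pset m d l) : #Z ≤ l := by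
  have hinj : Set.InjOn (fun z : ℤ => z * d) Z := fun z _ z' _ h =>
    mul_right_cancel₀ (by positivity) h
  calc #Z ≤ #(Ioc m (m + l)) :=
        card_le_card_of_injOn _ (fun z hz => mem_Ioc.2 (hZ z hz)) hinj
    _ = l := by simp [Int.card_Ioc]

section qval

variable {r : ℕ} (l d : Fin r → ℕ) (m : Fin r → ℤ)

theorem qval_mono : Monotone (qval l d m) := by
  intro z z' h
  refine sum_le_sum_of_subset (monotone_filter_right _ fun k hk => ?_)
  have : z * (d k : ℤ) ≤ z' * d k := mul_le_mul_of_nonneg_right h (by positivity)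
  omega

theorem qval_add_sum_filter_le (z : ℤ) :
    qval l d m z + ∑ k with z * (d k : ℤ) ≤ m k + l k, l k = ∑ k, l k := by
  simp only [qval, ← not_lt]
  exact sum_filter_add_sum_filter_not _ _ _

theorem qval_le_sum (z : ℤ) : qval l d m z ≤ ∑ k, l k :=
  (Nat.le_add_right _ _).trans (qval_add_sum_filter_le l d m z).le

theorem card_le_sum_of_forall_exists_mem_Pset (hd : ∀ k, 0 < d k) {Z : Finset ℤ}
    {K : Finset (Fin r)} (hZ : ∀ z ∈ Z, ∃ k ∈ K, z ∈ Pset (m k) (d k) (l k)) :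
    #Z ≤ ∑ k ∈ K, l k := by
  classical
  have hcover : Z ⊆ K.biUnion fun k => {z ∈ Z | z ∈ Pset (m k) (d k) (l k)} := fun z hz => by
    obtain ⟨k, hk, hzk⟩ := hZ z hz
    exact mem_biUnion.2 ⟨k, hk, mem_filter.2 ⟨hz, hzk⟩⟩
  calc #Z ≤ _ := card_le_card hcover
    _ ≤ _ := card_biUnion_le
    _ ≤ ∑ k ∈ K, l k := sum_le_sum fun k _ =>
        card_le_of_forall_mem_Pset (hd k) fun z hz => (mem_filter.1 hz).2

def mirror : Fin r → ℤ := fun k => -m k - l k - 1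

theorem qval_mirror_neg_add_qval {z : ℤ} (hz : ∀ k, z ∉ Pset (m k) (d k) (l k)) :
    qval l d (mirror l m) (-z) + qval l d m z = ∑ k, l k := by
  rw [← qval_add_sum_filter_le l d m z, add_comm]
  congr 1
  refine sum_congr (filter_congr fun k _ => ?_) fun _ _ => rfl
  have := hz k
  simp only [mirror, Pset, Set.mem_ofPred_eq, neg_mul] at this ⊢
  omega

theorem exists_not_mem_Pset_qval_lt (hd : ∀ k, 0 < d k) {N : ℕ} (hN : ∑ k, l k < N)
    {z : ℕ → ℤ} (hz : StrictMonoOn z (Set.Iic N)) :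
    ∃ p ≤ N, (∀ k, z p ∉ Pset (m k) (d k) (l k)) ∧ qval l d m (z p) < p := by
  classical
  set A := {p ∈ range (N + 1) | p ≤ qval l d m (z p)}
  have hA : A.Nonempty := ⟨0, by simp [A]⟩
  set a := A.max' hA
  obtain ⟨-, ha_le⟩ := mem_filter.1 (A.max'_mem hA)
  have haN : a < N := ha_le.trans_lt ((qval_le_sum l d m _).trans_lt hN)
  have hlt : ∀ p ∈ Ioc a N, qval l d m (z p) < p := fun p hp => by
    rw [mem_Ioc] at hp
    by_contra! h
    have := A.le_max' p (mem_filter.2 ⟨mem_range.2 (by omega), h⟩)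
    omega
  have hz_le : ∀ p ∈ Ioc a N, z (a + 1) ≤ z p := fun p hp => by
    rw [mem_Ioc] at hp
    exact hz.monotoneOn (Set.mem_Iic.2 haN) (Set.mem_Iic.2 hp.2) hp.1
  by_contra! hblocked
  have hsplit := qval_add_sum_filter_le l d m (z (a + 1))
  set K : Finset (Fin r) := {k | z (a + 1) * (d k : ℤ) ≤ m k + l k}
  have hcover : ∀ y ∈ (Ioc a N).image z, ∃ k ∈ K, y ∈ Pset (m k) (d k) (l k) := by
    rintro _ hy
    obtain ⟨p, hp, rfl⟩ := mem_image.1 hy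
    obtain ⟨k, hk⟩ := not_forall_not.1 fun h =>
      (hblocked p (mem_Ioc.1 hp).2 h).not_gt (hlt p hp)
    refine ⟨k, mem_filter.2 ⟨mem_univ _, ?_⟩, hk⟩
    exact (mul_le_mul_of_nonneg_right (hz_le p hp) (by positivity)).trans hk.2
  have hcard : #((Ioc a N).image z) = N - a := by
    rw [card_image_of_injOn (hz.injOn.mono fun p hp => (mem_Ioc.1 hp).2), Nat.card_Ioc]
  have hqa : a ≤ qval l d m (z (a + 1)) :=
    ha_le.trans (qval_mono l d m (hz.monotoneOn (Set.mem_Iic.2 haN.le) (Set.mem_Iic.2 haN)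
      (Nat.le_succ a)))
  have := card_le_sum_of_forall_exists_mem_Pset l d m hd hcover
  omega

end qval

section prefixSum

variable {n : ℕ} (s : Fin (n + 1) → ℕ)

def prefixSum (p : ℕ) : ℤ :=
  ∑ i ∈ univ.filter (fun i : Fin (n + 1) => (i : ℕ) < p), (s i : ℤ)

theorem prefixSum_mem_Sset {p : ℕ} (hp : p ≤ n + 1) : prefixSum s p ∈ Sset s p :=
  ⟨_, by rw [Fin.card_filter_val_lt]; omega, rfl⟩

theorem prefixSum_strictMonoOn (hs : ∀ i, 0 < s i) :
    StrictMonoOn (prefixSum s) (Set.Iic (n + 1)) := by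
  intro p _ p' hp' hpp'
  have hp : p < n + 1 := hpp'.trans_le hp'
  refine sum_lt_sum_of_subset (i := ⟨p, hp⟩) ?_ (by simpa using hpp') (by simp)
    (by exact_mod_cast hs _) fun _ _ _ => by positivity
  intro i
  simp only [mem_filter, mem_univ, true_and]
  omega

end prefixSum

section Nset

variable {r n : ℕ} (l d : Fin r → ℕ) (s : Fin (n + 1) → ℕ) (m : Fin r → ℤ)

theorem sub_qval_prefixSum_mem_Nset {p : ℕ} (hp : p ≤ n + 1)
    (hunb : ∀ k, prefixSum s p ∉ Pset (m k) (d k) (l k)) :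
    (p : ℤ) - qval l d m (prefixSum s p) ∈ Nset l d s m :=
  ⟨p, hp, _, ⟨prefixSum_mem_Sset s hp, hunb⟩, rfl⟩

theorem exists_pos_mem_Nset (hd : ∀ k, 0 < d k) (hsum : ∑ k, l k ≤ n) (hs : ∀ i, 0 < s i) :
    ∃ ν ∈ Nset l d s m, 0 < ν := by
  obtain ⟨p, hp, hunb, hq⟩ :=
    exists_not_mem_Pset_qval_lt l d m hd (by omega) (prefixSum_strictMonoOn s hs)
  exact ⟨_, sub_qval_prefixSum_mem_Nset l d s m hp hunb, by omega⟩

theorem exists_nonpos_mem_Nset (hd : ∀ k, 0 < d k) (hsum : ∑ k, l k = n) (hs : ∀ i, 0 < s i) :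
    ∃ ν ∈ Nset l d s m, ν ≤ 0 := by
  have hz : StrictMonoOn (fun p => -prefixSum s (n + 1 - p)) (Set.Iic (n + 1)) :=
    fun p hp p' hp' hpp' => neg_lt_neg <| prefixSum_strictMonoOn s hs
      (by simp) (by simp) (by simp at hp hp'; omega)
  obtain ⟨p, hp, hunb, hq⟩ := exists_not_mem_Pset_qval_lt l d (mirror l m) hd (by omega) hz
  have hunb' : ∀ k, prefixSum s (n + 1 - p) ∉ Pset (m k) (d k) (l k) :=
    fun k h => hunb k (neg_mem_Pset_iff.2 h)
  have := qval_mirror_neg_add_qval l d m hunb'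
  exact ⟨_, sub_qval_prefixSum_mem_Nset l d s m (Nat.sub_le _ _) hunb', by omega⟩

end Nset

theorem stmt7_general (r n : ℕ) (l d : Fin r → ℕ)
    (hd : ∀ k, 1 ≤ d k) (hsum : ∑ k, l k = n)
    (s : Fin (n + 1) → ℕ) (hs : ∀ i, 0 < s i)
    (m : Fin r → ℤ) (ν : ℤ) (hN : Nset l d s m = {ν, ν + 1}) :
    Nset l d s m = {0, 1} := by
  obtain ⟨a, ha, ha_pos⟩ := exists_pos_mem_Nset l d s m hd hsum.le hs
  obtain ⟨b, hb, hb_nonpos⟩ := exists_nonpos_mem_Nset l d s m hd hsum hs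
  rw [hN] at ha hb
  obtain rfl : ν = 0 := by
    simp only [Set.mem_insert_iff, Set.mem_singleton_iff] at ha hb
    omega
  rw [hN, zero_add]

theorem stmt7 (r n : ℕ) (hr : 1 ≤ r) (l d : Fin r → ℕ)
    (hl : ∀ k, 1 ≤ l k) (hd : ∀ k, 1 ≤ d k) (hsum : ∑ k, l k = n)
    (s : Fin (n + 1) → ℕ) (hs : ∀ i, 0 < s i) (hmono : Monotone s)
    (m : Fin r → ℤ) (ν : ℤ) (hN : Nset l d s m = {ν, ν + 1}) :
    Nset l d s m = {0, 1} :=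
  stmt7_general r n l d hd hsum s hs m ν hN
end

section
/- With the setup of the combinatorial determinantal condition: if m ∈ ℤ^r is determinantal, then there exist indices k, k' ∈ {1,...,r} such that m_k < d_k (s_{n−1} + s_n) and m_{k'} ≥ d_{k'} (s_0 + ··· + s_{n−2}) − l_{k'}. -/
theorem stmt10 (r n : ℕ) (hr : 1 ≤ r) (hn : 2 ≤ n) (l d : Fin r → ℕ)
    (hl : ∀ k, 1 ≤ l k) (hd : ∀ k, 1 ≤ d k) (hsum : ∑ k, l k = n)
    (s : Fin (n + 1) → ℕ) (hs : ∀ i, 0 < s i) (hmono : Monotone s)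
    (m : Fin r → ℤ) (hdet : Nset l d s m = {0, 1}) :
    (∃ k : Fin r, m k < (d k : ℤ) * ((s ⟨n - 1, by omega⟩ : ℤ) + (s ⟨n, by omega⟩ : ℤ))) ∧
    (∃ k' : Fin r, (d k' : ℤ) *
        (∑ i ∈ Finset.univ.filter (fun i : Fin (n + 1) => (i : ℕ) + 2 ≤ n), (s i : ℤ))
        - (l k' : ℤ) ≤ m k') := by
  constructor
  · -- part (a)
    set a : Fin (n + 1) := ⟨n - 1, by omega⟩ with ha
    set b : Fin (n + 1) := ⟨n, by omega⟩ with hb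
    have hab : a ≠ b := by
      simp only [ha, hb, ne_eq, Fin.mk.injEq]
      omega
    set z : ℤ := (s a : ℤ) + (s b : ℤ) with hz
    by_cases h : ∃ k, z ∈ Pset (m k) (d k) (l k)
    · obtain ⟨k, hk1, hk2⟩ := h
      refine ⟨k, ?_⟩
      have := mul_comm z ((d k : ℤ))
      linarith
    · push_neg at h
      have hmem : (2 : ℤ) - (qval l d m z : ℤ) ∈ Nset l d s m := by
        refine ⟨2, by omega, z, ⟨⟨⟨{a, b}, ?_, ?_⟩, h⟩, by norm_num⟩⟩
        · exact Finset.card_pair hab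
        · rw [Finset.sum_pair hab]
      rw [hdet] at hmem
      simp only [Set.mem_insert_iff, Set.mem_singleton_iff] at hmem
      have hq : 1 ≤ qval l d m z := by omega
      have hq' : qval l d m z ≠ 0 := by omega
      unfold qval at hq'
      obtain ⟨k, hkF, -⟩ := Finset.exists_ne_zero_of_sum_ne_zero hq'
      simp only [Finset.mem_filter, Finset.mem_univ, true_and] at hkF
      refine ⟨k, ?_⟩
      have hlk : (0 : ℤ) ≤ (l k : ℤ) := Int.natCast_nonneg _
      have := mul_comm z ((d k : ℤ))
      linarith
  · -- part (b)
    set A : Finset (Fin (n + 1)) :=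
      Finset.univ.filter (fun i : Fin (n + 1) => (i : ℕ) + 2 ≤ n) with hA
    set z : ℤ := ∑ i ∈ A, (s i : ℤ) with hz
    have hcard : A.card = n - 1 := by
      have h1 : A.card = ∑ i : Fin (n + 1), if (i : ℕ) + 2 ≤ n then 1 else 0 :=
        Finset.card_filter _ _
      rw [h1, Fin.sum_univ_eq_sum_range (fun i => if i + 2 ≤ n then 1 else 0)]
      rw [← Finset.card_filter]
      have : (Finset.range (n + 1)).filter (fun i => i + 2 ≤ n) = Finset.range (n - 1) := by
        ext i
        simp only [Finset.mem_filter, Finset.mem_range]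
        omega
      rw [this, Finset.card_range]
    by_cases h : ∃ k, z ∈ Pset (m k) (d k) (l k)
    · obtain ⟨k, hk1, hk2⟩ := h
      refine ⟨k, ?_⟩
      have := mul_comm z ((d k : ℤ))
      linarith
    · push_neg at h
      have hmem : ((n - 1 : ℕ) : ℤ) - (qval l d m z : ℤ) ∈ Nset l d s m := by
        exact ⟨n - 1, by omega, z, ⟨⟨⟨A, hcard, rfl⟩, h⟩, rfl⟩⟩
      rw [hdet] at hmem
      simp only [Set.mem_insert_iff, Set.mem_singleton_iff] at hmem
      have hq : qval l d m z < n := by omega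
      by_contra hno
      push_neg at hno
      have hall : ∀ k, m k + (l k : ℤ) < z * (d k : ℤ) := by
        intro k
        have := hno k
        have := mul_comm z ((d k : ℤ))
        linarith
      have : qval l d m z = n := by
        unfold qval
        rw [Finset.filter_true_of_mem (fun k _ => hall k)]
        exact hsum
      omega
end

section
/- Duality of determinantal vectors: let ρ ∈ ℤ^r be the critical degree, ρ_k = d_k (s_0+···+s_n) − l_k − 1, and suppose m + m' = ρ. Then for every k and every integer z: z ∈ P_k(m) if and only if (s_0+···+s_n) − z ∈ P_k(m'). Consequently, setting σ = s_0+···+s_n, the map z ↦ σ − z is a bijection from Q(m) to Q(m'), it maps S_p to S_{n+1−p}, and q_{m'}(σ−z) = n − q_m(z); hence N(m') = {1 − ν : ν ∈ N(m)}, so m is determinantal iff m' is determinantal. -/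
/-- `Q(m) = ⋃_p Q_p(m)`. -/
def Qset {r n : ℕ} (l d : Fin r → ℕ) (s : Fin (n + 1) → ℕ) (m : Fin r → ℤ) : Set ℤ :=
  {z : ℤ | (∃ p ≤ n + 1, z ∈ Sset s p) ∧ ∀ k, z ∉ Pset (m k) (d k) (l k)}

lemma pdual_aux (σ m m' : ℤ) (d l : ℕ) (h : m + m' = (d:ℤ) * σ - l - 1) (z : ℤ) :
    z ∈ Pset m d l ↔ σ - z ∈ Pset m' d l := by
  simp only [Pset, Set.mem_setOf_eq, sub_mul]
  rw [mul_comm (d:ℤ) σ] at h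
  generalize z * (d:ℤ) = X at *
  generalize σ * (d:ℤ) = Y at *
  omega

lemma sdual_aux {n : ℕ} (s : Fin (n+1) → ℕ) (p : ℕ) (z : ℤ)
    (hz : z ∈ Sset s p) : (∑ i, (s i : ℤ)) - z ∈ Sset s (n+1-p) := by
  obtain ⟨A, hA, rfl⟩ := hz
  refine ⟨Aᶜ, ?_, ?_⟩
  · simp [Finset.card_compl, hA]
  · have := Finset.sum_compl_add_sum A (fun i => (s i : ℤ))
    linarith

lemma qdual_aux {r n : ℕ} (l d : Fin r → ℕ) (hsum : ∑ k, l k = n)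
    (m m' : Fin r → ℤ) (σ : ℤ)
    (hdual : ∀ k, m k + m' k = (d k : ℤ) * σ - l k - 1) (z : ℤ)
    (hz : ∀ k, z ∉ Pset (m k) (d k) (l k)) :
    (qval l d m' (σ - z) : ℤ) = (n:ℤ) - qval l d m z := by
  unfold qval
  have hfe : Finset.univ.filter (fun k => m' k + (l k:ℤ) < (σ - z) * (d k:ℤ)) =
      Finset.univ.filter (fun k => ¬ (m k + (l k:ℤ) < z * (d k:ℤ))) := by
    apply Finset.filter_congr
    intro k _
    have h := hdual k
    have hzk := hz k
    simp only [Pset, Set.mem_setOf_eq, not_and, not_lt] at hzk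
    rw [sub_mul, mul_comm ((d k):ℤ) σ] at *
    generalize z * ((d k):ℤ) = X at *
    generalize σ * ((d k):ℤ) = Y at *
    omega
  rw [hfe]
  have := Finset.sum_filter_add_sum_filter_not Finset.univ
    (fun k => m k + (l k:ℤ) < z * (d k:ℤ)) l
  rw [hsum] at this
  omega

lemma qmap_aux {r n : ℕ} (l d : Fin r → ℕ) (s : Fin (n + 1) → ℕ)
    (m m' : Fin r → ℤ)
    (hdual : ∀ k, m k + m' k = (d k : ℤ) * (∑ i, (s i : ℤ)) - (l k : ℤ) - 1)
    (z : ℤ) (hz : z ∈ Qset l d s m) :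
    (∑ i, (s i : ℤ)) - z ∈ Qset l d s m' := by
  obtain ⟨⟨p, hp, hzp⟩, hnp⟩ := hz
  refine ⟨⟨n+1-p, by omega, sdual_aux s p z hzp⟩, fun k hc => ?_⟩
  exact hnp k ((pdual_aux _ (m k) (m' k) (d k) (l k) (hdual k) z).2 hc)

lemma nmap_aux {r n : ℕ} (l d : Fin r → ℕ) (hsum : ∑ k, l k = n)
    (s : Fin (n + 1) → ℕ) (m m' : Fin r → ℤ)
    (hdual : ∀ k, m k + m' k = (d k : ℤ) * (∑ i, (s i : ℤ)) - (l k : ℤ) - 1)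
    (ν : ℤ) (hν : ν ∈ Nset l d s m) : 1 - ν ∈ Nset l d s m' := by
  obtain ⟨p, hp, z, ⟨hzs, hznp⟩, rfl⟩ := hν
  refine ⟨n+1-p, by omega, (∑ i, (s i : ℤ)) - z,
    ⟨sdual_aux s p z hzs, fun k hc =>
      hznp k ((pdual_aux _ (m k) (m' k) (d k) (l k) (hdual k) z).2 hc)⟩, ?_⟩
  rw [qdual_aux l d hsum m m' _ hdual z hznp]
  omega

theorem stmt11 (r n : ℕ) (hr : 1 ≤ r) (l d : Fin r → ℕ)
    (hl : ∀ k, 1 ≤ l k) (hd : ∀ k, 1 ≤ d k) (hsum : ∑ k, l k = n)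
    (s : Fin (n + 1) → ℕ) (hs : ∀ i, 0 < s i)
    (m m' : Fin r → ℤ)
    (hdual : ∀ k, m k + m' k = (d k : ℤ) * (∑ i, (s i : ℤ)) - (l k : ℤ) - 1) :
    (∀ (k : Fin r) (z : ℤ),
      z ∈ Pset (m k) (d k) (l k) ↔
      (∑ i, (s i : ℤ)) - z ∈ Pset (m' k) (d k) (l k)) ∧
    Set.BijOn (fun z => (∑ i, (s i : ℤ)) - z) (Qset l d s m) (Qset l d s m') ∧
    (∀ p ≤ n + 1, ∀ z ∈ Sset s p, (∑ i, (s i : ℤ)) - z ∈ Sset s (n + 1 - p)) ∧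
    (∀ z ∈ Qset l d s m,
      (qval l d m' ((∑ i, (s i : ℤ)) - z) : ℤ) = (n : ℤ) - (qval l d m z : ℤ)) ∧
    Nset l d s m' = (fun ν : ℤ => 1 - ν) '' Nset l d s m ∧
    (Nset l d s m = {0, 1} ↔ Nset l d s m' = {0, 1}) := by
  have hdual' : ∀ k, m' k + m k = (d k : ℤ) * (∑ i, (s i : ℤ)) - (l k : ℤ) - 1 :=
    fun k => by linarith [hdual k]
  refine ⟨fun k z => pdual_aux _ (m k) (m' k) (d k) (l k) (hdual k) z,
    ⟨fun z hz => qmap_aux l d s m m' hdual z hz,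
     fun a _ b _ h => by simp only [sub_right_inj] at h; exact h,
     fun w hw => ⟨(∑ i, (s i : ℤ)) - w, qmap_aux l d s m' m hdual' w hw, by ring⟩⟩,
    fun p _ z hz => sdual_aux s p z hz,
    fun z hz => qdual_aux l d hsum m m' _ hdual z hz.2,
    ?_, ?_⟩
  · ext ν
    constructor
    · intro h
      exact ⟨1 - ν, nmap_aux l d hsum s m' m hdual' ν h, by ring⟩
    · rintro ⟨ν0, h0, rfl⟩
      exact nmap_aux l d hsum s m m' hdual ν0 h0
  · have h5 : Nset l d s m' = (fun ν : ℤ => 1 - ν) '' Nset l d s m := by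
      ext ν
      constructor
      · intro h
        exact ⟨1 - ν, nmap_aux l d hsum s m' m hdual' ν h, by ring⟩
      · rintro ⟨ν0, h0, rfl⟩
        exact nmap_aux l d hsum s m m' hdual ν0 h0
    have himg : (fun ν : ℤ => 1 - ν) '' {0, 1} = {0, 1} := by
      ext x
      simp only [Set.mem_image, Set.mem_insert_iff, Set.mem_singleton_iff]
      constructor
      · rintro ⟨a, ha, rfl⟩; omega
      · intro hx
        rcases hx with h | h
        · exact ⟨1, Or.inr rfl, by omega⟩
        · exact ⟨0, Or.inl rfl, by omega⟩
    constructor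
    · intro h; rw [h5, h, himg]
    · intro h
      have h2 : (fun ν : ℤ => 1 - ν) '' Nset l d s m = {0, 1} := h5.symm.trans h
      have h3 : (fun ν : ℤ => 1 - ν) '' ((fun ν : ℤ => 1 - ν) '' Nset l d s m)
          = Nset l d s m := by
        rw [Set.image_image]; simp
      rw [← h3, h2, himg]
end

section
/- Homogeneous scaled case (r = 1): let n ≥ 1, d ≥ 1, s_0 ≤ ··· ≤ s_n positive integers, and m ∈ ℤ. With P(m) = {z ∈ ℤ : m < zd ≤ m + n}, the integer m is determinantal (N(m) = {0,1}) if and only if d(s_2 + ··· + s_n) − n ≤ m ≤ d(s_0 + s_1) − 1. In particular a determinantal m exists iff d(s_2+···+s_n) − n < d(s_0 + s_1). -/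
/-!
An element of `N(m)` is `#A` for an index set `A` with `d · Σ_A s ≤ m`, or `#A - n` for one with
`d · Σ_A s > m + n`. Since `s` is monotone, any two indices carry at least `s₀ + s₁`, and any
set of fewer than `n` indices misses two of them, so carries at most `s₂ + ⋯ + sₙ`. Hence under
the two bounds the first kind has `#A ≤ 1` and the second `#A ≥ n`, so `N(m) ⊆ {0, 1}`; the sets
`{0, 1}` and `{2, …, n}` show that each bound is necessary. Positivity of `s` puts `0` and `1` in
`N(m)` for every `m` (witnesses `∅` or `{1, …, n}`, and `{0}` or all indices).
-/

open Finset

lemma qval_single (l d : ℕ) (m z : ℤ) :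
    (qval (fun _ : Fin 1 => l) (fun _ : Fin 1 => d) (fun _ : Fin 1 => m) z : ℤ) =
      if m + l < z * d then (l : ℤ) else 0 := by
  unfold qval
  split_ifs with h <;> simp [h]

lemma mem_Nset_single_iff {n : ℕ} (l d : ℕ) (s : Fin (n + 1) → ℕ) (m ν : ℤ) :
    ν ∈ Nset (fun _ : Fin 1 => l) (fun _ : Fin 1 => d) s (fun _ : Fin 1 => m) ↔
      ∃ A : Finset (Fin (n + 1)),
        ((∑ i ∈ A, (s i : ℤ)) * d ≤ m ∧ ν = #A) ∨
        (m + l < (∑ i ∈ A, (s i : ℤ)) * d ∧ ν = (#A : ℤ) - l) := by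
  constructor
  · rintro ⟨p, -, z, ⟨⟨A, rfl, rfl⟩, hP⟩, rfl⟩
    have hP := hP 0
    simp only [Pset, Set.mem_ofPred_eq] at hP
    rw [qval_single]
    refine ⟨A, ?_⟩
    split_ifs with h
    · exact .inr ⟨h, rfl⟩
    · exact .inl ⟨by omega, by simp⟩
  · rintro ⟨A, h⟩
    refine ⟨#A, card_le_univ A |>.trans (by simp), _, ⟨⟨A, rfl, rfl⟩, fun _ hP => ?_⟩, ?_⟩
    · simp only [Pset, Set.mem_ofPred_eq] at hP
      omega
    · rw [qval_single]
      split_ifs <;> omega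

lemma card_filter_two_le (n : ℕ) : #(univ.filter fun j : Fin (n + 1) => 2 ≤ (j : ℕ)) = n - 1 := by
  have := Fin.card_filter_val_lt (n := n + 1) (m := 2)
  have := card_filter_add_card_filter_not (s := univ) (fun j : Fin (n + 1) => (j : ℕ) < 2)
  simp only [not_lt, card_univ, Fintype.card_fin] at this
  omega

section Monotone

variable {n : ℕ} {s : Fin (n + 1) → ℕ}

lemma add_le_sum_of_two_le_card (hmono : Monotone s) (h1 : 1 < n + 1)
    {A : Finset (Fin (n + 1))} (hA : 2 ≤ #A) :
    s ⟨0, n.succ_pos⟩ + s ⟨1, h1⟩ ≤ ∑ i ∈ A, s i := by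
  obtain ⟨a, ha, b, hb, hab⟩ := one_lt_card.mp hA
  wlog hlt : a < b generalizing a b
  · exact this b hb a ha (Ne.symm hab) ((Ne.lt_or_gt hab).resolve_left hlt)
  have h0a : s ⟨0, n.succ_pos⟩ ≤ s a := hmono (Fin.zero_le _)
  have h1b : s ⟨1, h1⟩ ≤ s b := hmono (Fin.le_def.mpr (by have := Fin.lt_def.mp hlt; simp; omega))
  calc s ⟨0, n.succ_pos⟩ + s ⟨1, h1⟩ ≤ s a + s b := add_le_add h0a h1b
    _ = ∑ i ∈ {a, b}, s i := (sum_pair hab).symm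
    _ ≤ ∑ i ∈ A, s i := sum_le_sum_of_subset (by simp [insert_subset_iff, ha, hb])

lemma sum_filter_two_le_add (h1 : 1 < n + 1) :
    ∑ j ∈ univ.filter (fun j : Fin (n + 1) => 2 ≤ (j : ℕ)), s j + (s ⟨0, n.succ_pos⟩ + s ⟨1, h1⟩) =
      ∑ i, s i := by
  have hlow : univ.filter (fun j : Fin (n + 1) => ¬2 ≤ (j : ℕ)) = {⟨0, n.succ_pos⟩, ⟨1, h1⟩} := by
    ext j
    simp only [mem_filter, mem_univ, true_and, mem_insert, mem_singleton, Fin.ext_iff]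
    omega
  rw [← sum_filter_add_sum_filter_not univ (fun j : Fin (n + 1) => 2 ≤ (j : ℕ)), hlow,
    sum_pair (by simp [Fin.ext_iff])]

lemma sum_le_sum_filter_two_le (hmono : Monotone s) (h1 : 1 < n + 1)
    {A : Finset (Fin (n + 1))} (hA : #A < n) :
    ∑ i ∈ A, s i ≤ ∑ j ∈ univ.filter (fun j : Fin (n + 1) => 2 ≤ (j : ℕ)), s j := by
  have hAc : 2 ≤ #Aᶜ := by rw [card_compl, Fintype.card_fin]; omega
  have := add_le_sum_of_two_le_card hmono h1 hAc
  have := sum_add_sum_compl A s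
  have := sum_filter_two_le_add (s := s) h1
  omega

end Monotone

section Determinantal

variable {n d : ℕ} {s : Fin (n + 1) → ℕ}

lemma zero_one_subset_Nset (hd : 1 ≤ d) (hs : ∀ i, 0 < s i) (m : ℤ) :
    {0, 1} ⊆ Nset (fun _ : Fin 1 => n) (fun _ : Fin 1 => d) s (fun _ : Fin 1 => m) := by
  have hrest : (n : ℤ) ≤ ∑ i ∈ univ.erase 0, (s i : ℤ) := by
    simpa [card_erase_of_mem] using
      card_nsmul_le_sum (univ.erase 0) (fun i => (s i : ℤ)) 1 (fun i _ => by exact_mod_cast hs i)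
  have hd' : (1 : ℤ) ≤ d := by exact_mod_cast hd
  rintro ν (rfl | rfl) <;> rw [mem_Nset_single_iff]
  · by_cases hm : 0 ≤ m
    · exact ⟨∅, .inl ⟨by simpa, by simp⟩⟩
    · exact ⟨univ.erase 0, .inr ⟨by nlinarith, by simp⟩⟩
  · by_cases hm : (s 0 : ℤ) * d ≤ m
    · exact ⟨{0}, .inl ⟨by simpa, by simp⟩⟩
    · refine ⟨univ, .inr ⟨?_, by simp⟩⟩
      rw [← add_sum_erase _ _ (mem_univ 0), add_mul]
      nlinarith

lemma Nset_subset_zero_one_iff (hmono : Monotone s) (h1 : 1 < n + 1) (m : ℤ) :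
    Nset (fun _ : Fin 1 => n) (fun _ : Fin 1 => d) s (fun _ : Fin 1 => m) ⊆ {0, 1} ↔
      (d : ℤ) * (∑ j ∈ univ.filter (fun j : Fin (n + 1) => 2 ≤ (j : ℕ)), (s j : ℤ)) - n ≤ m ∧
        m ≤ (d : ℤ) * ((s ⟨0, n.succ_pos⟩ : ℤ) + (s ⟨1, h1⟩ : ℤ)) - 1 := by
  have hd : (0 : ℤ) ≤ d := by positivity
  constructor
  · intro hsub
    constructor
    · by_contra! hm
      have hmem := hsub <| (mem_Nset_single_iff _ _ _ _ _).2
        ⟨univ.filter (fun j : Fin (n + 1) => 2 ≤ (j : ℕ)), .inr ⟨by linarith, rfl⟩⟩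
      simp only [Set.mem_insert_iff, Set.mem_singleton_iff, card_filter_two_le] at hmem
      omega
    · by_contra! hm
      have hne : (⟨0, n.succ_pos⟩ : Fin (n + 1)) ≠ ⟨1, h1⟩ := by simp [Fin.ext_iff]
      have hmem := hsub <| (mem_Nset_single_iff _ _ _ _ _).2
        ⟨{⟨0, n.succ_pos⟩, ⟨1, h1⟩}, .inl ⟨by rw [sum_pair hne]; linarith, rfl⟩⟩
      simp at hmem
  · rintro ⟨hlow, hup⟩ ν hν
    obtain ⟨A, ⟨hle, rfl⟩ | ⟨hgt, rfl⟩⟩ := (mem_Nset_single_iff _ _ _ _ _).1 hν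
    · have hA : #A ≤ 1 := by
        by_contra! hA
        have := add_le_sum_of_two_le_card hmono h1 hA
        have : ((s ⟨0, n.succ_pos⟩ : ℤ) + s ⟨1, h1⟩) * d ≤ (∑ i ∈ A, (s i : ℤ)) * d :=
          mul_le_mul_of_nonneg_right (by exact_mod_cast this) hd
        linarith
      simp only [Set.mem_insert_iff, Set.mem_singleton_iff]
      omega
    · have hA : n ≤ #A := by
        by_contra! hA
        have := sum_le_sum_filter_two_le hmono h1 hA
        have : (∑ i ∈ A, (s i : ℤ)) * d ≤
            (∑ j ∈ univ.filter (fun j : Fin (n + 1) => 2 ≤ (j : ℕ)), (s j : ℤ)) * d :=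
          mul_le_mul_of_nonneg_right (by exact_mod_cast this) hd
        linarith
      have := card_le_univ A
      simp only [Set.mem_insert_iff, Set.mem_singleton_iff, Fintype.card_fin] at this ⊢
      omega

lemma Nset_eq_zero_one_iff (hd : 1 ≤ d) (hs : ∀ i, 0 < s i) (hmono : Monotone s)
    (h1 : 1 < n + 1) (m : ℤ) :
    Nset (fun _ : Fin 1 => n) (fun _ : Fin 1 => d) s (fun _ : Fin 1 => m) = {0, 1} ↔
      (d : ℤ) * (∑ j ∈ univ.filter (fun j : Fin (n + 1) => 2 ≤ (j : ℕ)), (s j : ℤ)) - n ≤ m ∧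
        m ≤ (d : ℤ) * ((s ⟨0, n.succ_pos⟩ : ℤ) + (s ⟨1, h1⟩ : ℤ)) - 1 := by
  rw [← Nset_subset_zero_one_iff hmono h1]
  exact ⟨fun h => h.le, fun h => h.antisymm (zero_one_subset_Nset hd hs m)⟩

end Determinantal

theorem stmt13 (n : ℕ) (hn : 1 ≤ n) (d : ℕ) (hd : 1 ≤ d)
    (s : Fin (n + 1) → ℕ) (hs : ∀ i, 0 < s i) (hmono : Monotone s) :
    (∀ m : ℤ,
      Nset (fun _ : Fin 1 => n) (fun _ : Fin 1 => d) s (fun _ : Fin 1 => m) = {0, 1} ↔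
      ((d : ℤ) * (∑ j ∈ Finset.univ.filter (fun j : Fin (n + 1) => 2 ≤ (j : ℕ)), (s j : ℤ))
          - (n : ℤ) ≤ m ∧
        m ≤ (d : ℤ) * ((s ⟨0, by omega⟩ : ℤ) + (s ⟨1, by omega⟩ : ℤ)) - 1)) ∧
    ((∃ m : ℤ,
        Nset (fun _ : Fin 1 => n) (fun _ : Fin 1 => d) s (fun _ : Fin 1 => m) = {0, 1}) ↔
      (d : ℤ) * (∑ j ∈ Finset.univ.filter (fun j : Fin (n + 1) => 2 ≤ (j : ℕ)), (s j : ℤ))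
          - (n : ℤ) < (d : ℤ) * ((s ⟨0, by omega⟩ : ℤ) + (s ⟨1, by omega⟩ : ℤ))) := by
  have key := Nset_eq_zero_one_iff hd hs hmono (by omega : 1 < n + 1)
  refine ⟨key, ⟨fun ⟨m, hm⟩ => ?_, fun h => ⟨_, (key _).2 ⟨by omega, le_rfl⟩⟩⟩⟩
  have := (key m).1 hm
  omega
end

section
/- Disjointification of determinantal vectors: with l_k ≥ 1, Σ l_k = n, d_k ≥ 1, and s_0 ≤ ··· ≤ s_n positive integers, if m ∈ ℤ^r is determinantal (N(m) = {0,1}) then there exists a determinantal m' ∈ ℤ^r such that the sets P_1(m'),...,P_r(m') are pairwise disjoint and ⋃_k P_k(m) ⊆ ⋃_k P_k(m'). -/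
/-!
Raising `m_i` by `d_i` shifts `P_i(m)` up by one. If `P_i(m)` meets `P_j(m)` and `b = min P_i(m)`
lies in `P_j(m)`, this shift only enlarges the cover `⋃ P_k`, since the one point it gives up is
still covered by `P_j`; and for an uncovered `z` the interval `P_i` lies below `z` before the shift
iff it does after, so `q(z)` and hence `N(m)` can only shrink.

On the other hand, `N(m) ⊆ {0, 1}` already forces `0, 1 ∈ N(m)` and `m_k + l_k < (T + 1) d_k` with
`T = Σ s_i`. Walk along the partial sums `s_0 + ⋯ + s_{c-1}` (resp. their complements in `T`) to
the first one `z` not covered: the `c` covered ones before it lie in the intervals below `z`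
(resp. not below `z`), which have at most `q(z)` (resp. `n - q(z)`) points, so `c - q(z) ≤ 0`
(resp. `n + 1 - c - q(z) ≥ 1`); an interval reaching beyond `T` would make the second count strict.

So `Σ m'_k` is bounded on the admissible `m'` whose cover contains that of `m`, and a maximiser
has pairwise disjoint intervals, since otherwise the shift would increase it.
-/

open Finset

section Interval

variable {m z b : ℤ} {d l : ℕ}

lemma mem_Pset_iff_ediv (hd : 0 < d) : z ∈ Pset m d l ↔ m / d < z ∧ z ≤ (m + l) / d := by
  have hd' : (0 : ℤ) < d := by exact_mod_cast hd
  rw [Int.ediv_lt_iff_lt_mul hd', Int.le_ediv_iff_mul_le hd']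
  rfl

lemma ordConnected_Pset : (Pset m d l).OrdConnected :=
  ⟨fun _ hx _ hy _ hw => ⟨hx.1.trans_le (by gcongr; exact hw.1),
    (mul_le_mul_of_nonneg_right hw.2 (Int.natCast_nonneg d)).trans hy.2⟩⟩

lemma isLeast_Pset (hd : 0 < d) (h : (Pset m d l).Nonempty) :
    IsLeast (Pset m d l) (m / d + 1) := by
  obtain ⟨z, hz⟩ := h
  rw [mem_Pset_iff_ediv hd] at hz
  refine ⟨(mem_Pset_iff_ediv hd).2 ⟨by omega, by omega⟩, fun w hw => ?_⟩
  rw [mem_Pset_iff_ediv hd] at hw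
  omega

lemma mem_Pset_add_self : z ∈ Pset (m + d) d l ↔ z - 1 ∈ Pset m d l := by
  simp only [Pset, Set.mem_ofPred_eq, sub_mul, one_mul]
  constructor <;> rintro ⟨h₁, h₂⟩ <;> constructor <;> linarith

lemma Pset_subset_insert_Pset_add (hb : IsLeast (Pset m d l) b) :
    Pset m d l ⊆ insert b (Pset (m + d) d l) := by
  intro w hw
  rcases (hb.2 hw).eq_or_lt with rfl | hbw
  · exact Set.mem_insert _ _
  · exact Set.mem_insert_of_mem _ <| mem_Pset_add_self.2 <|
      ordConnected_Pset.out hb.1 hw ⟨by omega, by omega⟩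

lemma add_lt_mul_of_mem_Pset_of_lt (hy : b ∈ Pset m d l) (hbz : b < z) (hz : z ∉ Pset m d l) :
    m + l < z * d := by
  by_contra! h
  exact hz ⟨hy.1.trans_le (by gcongr), h⟩

lemma mul_le_of_mem_Pset_of_le (hy : b ∈ Pset m d l) (hzb : z ≤ b) : z * d ≤ m + l :=
  (mul_le_mul_of_nonneg_right hzb (Int.natCast_nonneg d)).trans hy.2

lemma add_lt_mul_of_notMem_Pset_add (hb : b ∈ Pset m d l) (hz : z ∉ Pset (m + d) d l)
    (h : m + l < z * d) : m + d + l < z * d := by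
  by_contra! h'
  have hbz : b < z := by
    by_contra! hzb
    linarith [mul_le_of_mem_Pset_of_le hb hzb]
  refine hz (mem_Pset_add_self.2 ⟨hb.1.trans_le (by gcongr; omega), ?_⟩)
  linarith [sub_mul z 1 (d : ℤ)]

end Interval

section Counting

variable {m z : ℤ} {d l : ℕ}

noncomputable def Pfinset (m : ℤ) (d l : ℕ) : Finset ℤ := Ioc (m / d) ((m + l) / d)

lemma mem_Pfinset (hd : 0 < d) : z ∈ Pfinset m d l ↔ z ∈ Pset m d l := by
  rw [Pfinset, mem_Ioc, mem_Pset_iff_ediv hd]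

lemma add_ediv_le_ediv_add (hd : 0 < d) : (m + l) / d ≤ m / d + l := by
  have hd' : (0 : ℤ) < d := by exact_mod_cast hd
  calc (m + l) / d ≤ (m + l * d) / d := Int.ediv_le_ediv hd' (by nlinarith)
    _ = m / d + l := Int.add_mul_ediv_right _ _ hd'.ne'

lemma card_filter_Pfinset_le (hd : 0 < d) (T : ℤ) : #{z ∈ Pfinset m d l | z ≤ T} ≤ l := by
  refine (card_filter_le _ _).trans ?_
  rw [Pfinset, Int.card_Ioc]
  have := add_ediv_le_ediv_add (m := m) (l := l) hd
  omega

lemma card_filter_Pfinset_lt (hd : 0 < d) (hl : 0 < l) {T : ℤ} (h : (T + 1) * d ≤ m + l) :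
    #{z ∈ Pfinset m d l | z ≤ T} < l := by
  have hsub : {z ∈ Pfinset m d l | z ≤ T} ⊆ Ioc (m / d) T := fun z hz => by
    simp only [Pfinset, mem_filter, mem_Ioc] at hz
    exact mem_Ioc.2 ⟨hz.1.1, hz.2⟩
  have hT : T + 1 ≤ (m + l) / d := (Int.le_ediv_iff_mul_le (by exact_mod_cast hd)).2 h
  have := add_ediv_le_ediv_add (m := m) (l := l) hd
  refine (card_le_card hsub).trans_lt ?_
  rw [Int.card_Ioc]
  omega

lemma card_le_sum_card_filter_Pfinset {ι : Type*} (m : ι → ℤ) (d l : ι → ℕ) (hd : ∀ k, 0 < d k)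
    {X : Finset ℤ} {K : Finset ι} {T : ℤ}
    (hX : ∀ x ∈ X, x ≤ T ∧ ∃ k ∈ K, x ∈ Pset (m k) (d k) (l k)) :
    #X ≤ ∑ k ∈ K, #{z ∈ Pfinset (m k) (d k) (l k) | z ≤ T} := by
  classical
  refine (card_le_card fun x hx => ?_).trans card_biUnion_le
  obtain ⟨hxT, k, hk, hxk⟩ := hX x hx
  exact mem_biUnion.2 ⟨k, hk, mem_filter.2 ⟨(mem_Pfinset (hd k)).2 hxk, hxT⟩⟩

end Counting

section PartialSums

variable {n : ℕ} (s : Fin (n + 1) → ℕ)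

def partialSum (c : Fin (n + 2)) : ℤ := ∑ i : Fin (n + 1) with i.val < c.val, (s i : ℤ)

lemma partialSum_mem_Sset (c : Fin (n + 2)) : partialSum s c ∈ Sset s c :=
  ⟨_, by rw [Fin.card_filter_val_lt]; omega, rfl⟩

lemma sub_partialSum_mem_Sset (c : Fin (n + 2)) :
    ∑ i, (s i : ℤ) - partialSum s c ∈ Sset s (n + 1 - c) := by
  refine ⟨univ.filter fun i : Fin (n + 1) => ¬i.val < c.val, ?_, ?_⟩
  · rw [filter_not, card_sdiff_of_subset (filter_subset _ _), Fin.card_filter_val_lt, card_univ,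
      Fintype.card_fin]
    omega
  · rw [partialSum, ← sum_filter_add_sum_filter_not univ (fun i : Fin (n + 1) => i.val < c.val)]
    ring

lemma partialSum_nonneg (c : Fin (n + 2)) : 0 ≤ partialSum s c :=
  sum_nonneg fun _ _ => Int.natCast_nonneg _

lemma partialSum_le_sum (c : Fin (n + 2)) : partialSum s c ≤ ∑ i, (s i : ℤ) :=
  sum_le_sum_of_subset_of_nonneg (filter_subset _ _) fun _ _ _ => Int.natCast_nonneg _

lemma strictMono_partialSum (hs : ∀ i, 0 < s i) : StrictMono (partialSum s) := by
  intro a b hab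
  refine sum_lt_sum_of_subset (i := (⟨a, by omega⟩ : Fin (n + 1))) ?_ ?_ ?_
    (by exact_mod_cast hs _) fun _ _ _ => Int.natCast_nonneg _
  · intro i
    simp only [mem_filter, mem_univ, true_and]
    omega
  · simpa using hab
  · simp

end PartialSums

section Determinantal

variable {r n : ℕ} {l d : Fin r → ℕ} {s : Fin (n + 1) → ℕ} {m : Fin r → ℤ}

lemma exists_first_notMem_iUnion_Pset (hd : ∀ k, 0 < d k) (hsum : ∑ k, l k = n)
    {x : Fin (n + 2) → ℤ} (hx : Function.Injective x) {T : ℤ} (hxT : ∀ c, x c ≤ T) :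
    ∃ c, x c ∉ ⋃ k, Pset (m k) (d k) (l k) ∧
      ∀ c' < c, x c' ∈ ⋃ k, Pset (m k) (d k) (l k) := by
  have hex : ∃ c, x c ∉ ⋃ k, Pset (m k) (d k) (l k) := by
    by_contra! hcov
    have hcard := card_le_sum_card_filter_Pfinset m d l hd (X := univ.image x) (K := univ)
      (T := T) fun _ hy => by
        obtain ⟨c, -, rfl⟩ := mem_image.1 hy
        obtain ⟨k, hk⟩ := Set.mem_iUnion.1 (hcov c)
        exact ⟨hxT c, k, mem_univ k, hk⟩
    have hle : ∑ k, #{z ∈ Pfinset (m k) (d k) (l k) | z ≤ T} ≤ ∑ k, l k :=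
      sum_le_sum fun k _ => card_filter_Pfinset_le (hd k) T
    rw [card_image_of_injective _ hx, card_univ, Fintype.card_fin] at hcard
    omega
  obtain ⟨c, hc, hmin⟩ := wellFounded_lt.has_min {c | x c ∉ ⋃ k, Pset (m k) (d k) (l k)} hex
  exact ⟨c, hc, fun c' hc' => by_contra fun h => hmin c' h hc'⟩

lemma zero_mem_Nset (hd : ∀ k, 0 < d k) (hsum : ∑ k, l k = n) (hs : ∀ i, 0 < s i)
    (hN : Nset l d s m ⊆ {0, 1}) : 0 ∈ Nset l d s m := by
  have hmono := strictMono_partialSum s hs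
  obtain ⟨c, hc, hcov⟩ := exists_first_notMem_iUnion_Pset (m := m) hd hsum hmono.injective
    (partialSum_le_sum s)
  set z := partialSum s c
  have hz : ∀ k, z ∉ Pset (m k) (d k) (l k) := by simpa using hc
  have hmem : (c : ℤ) - qval l d m z ∈ Nset l d s m :=
    ⟨c, by omega, z, ⟨partialSum_mem_Sset s c, hz⟩, rfl⟩
  have hcq : (c : ℕ) ≤ qval l d m z := by
    have hcard := card_le_sum_card_filter_Pfinset m d l hd (X := (Iio c).image (partialSum s))
      (K := univ.filter fun k => m k + (l k : ℤ) < z * d k) (T := z) fun y hy => by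
        obtain ⟨c', hc', rfl⟩ := mem_image.1 hy
        have hlt := hmono (mem_Iio.1 hc')
        obtain ⟨k, hk⟩ := Set.mem_iUnion.1 (hcov c' (mem_Iio.1 hc'))
        exact ⟨hlt.le, k, mem_filter.2 ⟨mem_univ k, add_lt_mul_of_mem_Pset_of_lt hk hlt (hz k)⟩, hk⟩
    rw [card_image_of_injective _ hmono.injective, Fin.card_Iio] at hcard
    exact hcard.trans (sum_le_sum fun k _ => card_filter_Pfinset_le (hd k) z)
  rcases hN hmem with h | h
  · exact h ▸ hmem
  · simp only [Set.mem_singleton_iff] at h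
    omega

lemma one_mem_Nset_and_add_lt_mul (hl : ∀ k, 0 < l k) (hd : ∀ k, 0 < d k)
    (hsum : ∑ k, l k = n) (hs : ∀ i, 0 < s i) (hN : Nset l d s m ⊆ {0, 1}) :
    1 ∈ Nset l d s m ∧ ∀ k, m k + l k < (∑ i, (s i : ℤ) + 1) * d k := by
  set T := ∑ i, (s i : ℤ)
  set x : Fin (n + 2) → ℤ := fun c => T - partialSum s c
  have hanti : StrictAnti x := fun a b hab => sub_lt_sub_left (strictMono_partialSum s hs hab) T
  have hxT : ∀ c, x c ≤ T := fun c => sub_le_self T (partialSum_nonneg s c)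
  obtain ⟨c, hc, hcov⟩ := exists_first_notMem_iUnion_Pset (m := m) hd hsum hanti.injective hxT
  have hz : ∀ k, x c ∉ Pset (m k) (d k) (l k) := by simpa using hc
  set A := univ.filter fun k => ¬(m k + (l k : ℤ) < x c * d k)
  have hmem : ((n + 1 - c : ℕ) : ℤ) - qval l d m (x c) ∈ Nset l d s m :=
    ⟨n + 1 - c, by omega, x c, ⟨sub_partialSum_mem_Sset s c, hz⟩, rfl⟩
  have hsplit : qval l d m (x c) + ∑ k ∈ A, l k = n :=
    hsum ▸ sum_filter_add_sum_filter_not univ _ l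
  have hcard : (c : ℕ) ≤ ∑ k ∈ A, #{z ∈ Pfinset (m k) (d k) (l k) | z ≤ T} := by
    have hcard := card_le_sum_card_filter_Pfinset m d l hd (X := (Iio c).image x) (K := A)
      (T := T) fun y hy => by
        obtain ⟨c', hc', rfl⟩ := mem_image.1 hy
        obtain ⟨k, hk⟩ := Set.mem_iUnion.1 (hcov c' (mem_Iio.1 hc'))
        have hle := mul_le_of_mem_Pset_of_le hk (hanti (mem_Iio.1 hc')).le
        exact ⟨hxT c', k, mem_filter.2 ⟨mem_univ k, hle.not_gt⟩, hk⟩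
    rwa [card_image_of_injective _ hanti.injective, Fin.card_Iio] at hcard
  have hle : ∑ k ∈ A, #{z ∈ Pfinset (m k) (d k) (l k) | z ≤ T} ≤ ∑ k ∈ A, l k :=
    sum_le_sum fun k _ => card_filter_Pfinset_le (hd k) T
  have hν : ((n + 1 - c : ℕ) : ℤ) - qval l d m (x c) = 1 := by
    rcases hN hmem with h | h
    · omega
    · exact h
  refine ⟨hν ▸ hmem, fun k => ?_⟩
  by_contra! hk
  have hkA : k ∈ A := by
    have : x c * d k < (T + 1) * d k := by
      gcongr
      exacts [Int.natCast_pos.2 (hd k), by linarith [hxT c]]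
    exact mem_filter.2 ⟨mem_univ k, by linarith⟩
  have hlt : ∑ k ∈ A, #{z ∈ Pfinset (m k) (d k) (l k) | z ≤ T} < ∑ k ∈ A, l k :=
    sum_lt_sum (fun k _ => card_filter_Pfinset_le (hd k) T)
      ⟨k, hkA, card_filter_Pfinset_lt (hd k) (hl k) hk⟩
  omega

end Determinantal

section Move

open Function

variable {r n : ℕ} {l d : Fin r → ℕ} {s : Fin (n + 1) → ℕ} {m : Fin r → ℤ} {i j : Fin r} {b : ℤ}

lemma exists_isLeast_mem_of_not_disjoint (hd : ∀ k, 0 < d k) {k k' : Fin r} (hkk' : k ≠ k')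
    (h : ¬Disjoint (Pset (m k) (d k) (l k)) (Pset (m k') (d k') (l k'))) :
    ∃ i j, i ≠ j ∧ ∃ b, IsLeast (Pset (m i) (d i) (l i)) b ∧ b ∈ Pset (m j) (d j) (l j) := by
  obtain ⟨z, hzk, hzk'⟩ := Set.not_disjoint_iff.1 h
  have hb := isLeast_Pset (hd k) ⟨z, hzk⟩
  have hb' := isLeast_Pset (hd k') ⟨z, hzk'⟩
  rcases le_total (m k' / d k' + 1) (m k / d k + 1) with hle | hle
  · exact ⟨k, k', hkk', _, hb, ordConnected_Pset.out hb'.1 hzk' ⟨hle, hb.2 hzk⟩⟩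
  · exact ⟨k', k, hkk'.symm, _, hb', ordConnected_Pset.out hb.1 hzk ⟨hle, hb'.2 hzk'⟩⟩

lemma iUnion_Pset_subset_update (hij : i ≠ j) (hb : IsLeast (Pset (m i) (d i) (l i)) b)
    (hbj : b ∈ Pset (m j) (d j) (l j)) :
    ⋃ k, Pset (m k) (d k) (l k) ⊆ ⋃ k, Pset (update m i (m i + d i) k) (d k) (l k) := by
  refine Set.iUnion_subset fun k => ?_
  by_cases hk : k = i
  · subst hk
    refine (Pset_subset_insert_Pset_add hb).trans (Set.insert_subset ?_ ?_)
    · exact Set.mem_iUnion.2 ⟨j, by rwa [update_of_ne hij.symm]⟩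
    · exact Set.subset_iUnion_of_subset k (by rw [update_self])
  · exact Set.subset_iUnion_of_subset k (by rw [update_of_ne hk])

lemma qval_update_of_notMem (hb : b ∈ Pset (m i) (d i) (l i)) {z : ℤ}
    (hz : z ∉ ⋃ k, Pset (update m i (m i + d i) k) (d k) (l k)) :
    qval l d (update m i (m i + d i)) z = qval l d m z := by
  refine sum_congr (filter_congr fun k _ => ?_) fun _ _ => rfl
  by_cases hk : k = i
  · subst hk
    rw [update_self]
    refine ⟨fun h => by linarith [Int.natCast_nonneg (d k)], fun h => ?_⟩
    exact add_lt_mul_of_notMem_Pset_add hb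
      (fun hz' => hz (Set.mem_iUnion.2 ⟨k, by rwa [update_self]⟩)) h
  · rw [update_of_ne hk]

lemma Nset_update_subset (hij : i ≠ j) (hb : IsLeast (Pset (m i) (d i) (l i)) b)
    (hbj : b ∈ Pset (m j) (d j) (l j)) :
    Nset l d s (update m i (m i + d i)) ⊆ Nset l d s m := by
  rintro ν ⟨p, hp, z, ⟨hzS, hz⟩, rfl⟩
  have hz' : z ∉ ⋃ k, Pset (update m i (m i + d i) k) (d k) (l k) := by
    simpa only [Set.mem_iUnion, not_exists] using hz
  refine ⟨p, hp, z, ⟨hzS, fun k hk => hz' ?_⟩, by rw [qval_update_of_notMem hb.1 hz']⟩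
  exact iUnion_Pset_subset_update hij hb hbj (Set.mem_iUnion.2 ⟨k, hk⟩)

end Move

theorem stmt16_general (r n : ℕ) (l d : Fin r → ℕ)
    (hl : ∀ k, 1 ≤ l k) (hd : ∀ k, 1 ≤ d k) (hsum : ∑ k, l k = n)
    (s : Fin (n + 1) → ℕ) (hs : ∀ i, 0 < s i)
    (m : Fin r → ℤ) (hdet : Nset l d s m = {0, 1}) :
    ∃ m' : Fin r → ℤ,
      Nset l d s m' = {0, 1} ∧
      (∀ k k' : Fin r, k ≠ k' →
        Disjoint (Pset (m' k) (d k) (l k)) (Pset (m' k') (d k') (l k'))) ∧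
      (⋃ k, Pset (m k) (d k) (l k)) ⊆ ⋃ k, Pset (m' k) (d k) (l k) := by
  obtain ⟨_, ⟨m', hN, hcov, rfl⟩, hmax⟩ := Int.exists_greatest_of_bdd
    (P := fun σ => ∃ m' : Fin r → ℤ, Nset l d s m' ⊆ {0, 1} ∧
      (⋃ k, Pset (m k) (d k) (l k)) ⊆ (⋃ k, Pset (m' k) (d k) (l k)) ∧ ∑ k, m' k = σ)
    ⟨∑ k, (∑ i, (s i : ℤ) + 1) * d k, by
      rintro _ ⟨m', hN, -, rfl⟩
      have hbound := (one_mem_Nset_and_add_lt_mul hl hd hsum hs hN).2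
      exact sum_le_sum fun k _ => by linarith [hbound k, Int.natCast_nonneg (l k)]⟩
    ⟨_, m, hdet.le, subset_rfl, rfl⟩
  refine ⟨m', hN.antisymm ?_, fun k k' hkk' => ?_, hcov⟩
  · rintro _ (rfl | rfl)
    exacts [zero_mem_Nset hd hsum hs hN, (one_mem_Nset_and_add_lt_mul hl hd hsum hs hN).1]
  · by_contra h
    obtain ⟨i, j, hij, b, hb, hbj⟩ := exists_isLeast_mem_of_not_disjoint hd hkk' h
    have hle := hmax _ ⟨_, (Nset_update_subset hij hb hbj).trans hN,
      hcov.trans (iUnion_Pset_subset_update hij hb hbj), rfl⟩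
    rw [sum_update_of_mem (mem_univ i),
      sum_eq_add_sum_sdiff_singleton_of_mem (mem_univ i) m'] at hle
    linarith [Int.natCast_pos.2 (hd i)]

theorem stmt16 (r n : ℕ) (hr : 1 ≤ r) (l d : Fin r → ℕ)
    (hl : ∀ k, 1 ≤ l k) (hd : ∀ k, 1 ≤ d k) (hsum : ∑ k, l k = n)
    (s : Fin (n + 1) → ℕ) (hs : ∀ i, 0 < s i) (hmono : Monotone s)
    (m : Fin r → ℤ) (hdet : Nset l d s m = {0, 1}) :
    ∃ m' : Fin r → ℤ,
      Nset l d s m' = {0, 1} ∧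
      (∀ k k' : Fin r, k ≠ k' →
        Disjoint (Pset (m' k) (d k) (l k)) (Pset (m' k') (d k') (l k'))) ∧
      (⋃ k, Pset (m k) (d k) (l k)) ⊆ ⋃ k, Pset (m' k) (d k) (l k) :=
  stmt16_general r n l d hl hd hsum s hs m hdet
end
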